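/- arXiv:2002.01754 — 5 statements merged into one kernel-verified Lean document; each statement's English description precedes it below -/
import Mathlib

section
/- Let (X,d) be a complete b-metric space with coefficient s ≥ 1 and let E be a nonempty closed subset of X. For each i ∈ ℕ₀ let T_i : X → X be a weak quasi-contraction with T_i(E) ⊆ E, and suppose that diam O_{T_{f(j)}}(T_{f(i)}x, T_{f(i)}y) ≤ diam O_{T_{f(j)}}(x,y) for all x,y ∈ X, all f ∈ 𝔉 and all i,j ∈ ℕ₀, where 𝔉 is a nonempty set of mappings f : ℕ₀ → ℕ₀ with property (F). Assume property (P1): for each ε > 0 there exists n_ε ∈ ℕ such that for each f ∈ 𝔉 and each x ∈ X one has d(T_{f(n_ε)}T_{f(n_ε−1)}⋯T_{f(1)}T_{f(0)}x, E) < ε. Then for each ε > 0 there exist δ > 0 and n₀ ∈ ℕ such that for each f ∈ 𝔉 and each sequence {x_i}_{i=0}^∞ ⊆ X satisfying diam O_{T_{f(j)}}(x_{i+1}, T_{f(i)}x_i) ≤ δ for all i,j ∈ ℕ₀, one has d(x_i, E) < ε for all i ≥ n₀. -/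
open Set Filter Topology

/-- The orbit of `x` under `T`: `{Tⁿ x : n ∈ ℕ₀}`. -/
def orb {X : Type*} (T : X → X) (x : X) : Set X := {y | ∃ n : ℕ, y = T^[n] x}

/-- The double orbit `O_T(x,y) = O_T(x) ∪ O_T(y)`. -/
def orb2 {X : Type*} (T : X → X) (x y : X) : Set X := orb T x ∪ orb T y

/-- The set of pairwise distances of points of `A`. -/
def distSet {X : Type*} (d : X → X → ℝ) (A : Set X) : Set ℝ :=
  {r | ∃ a ∈ A, ∃ b ∈ A, r = d a b}

/-- The diameter of `A` with respect to the distance function `d`. -/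
noncomputable def diamd {X : Type*} (d : X → X → ℝ) (A : Set X) : ℝ :=
  sSup (distSet d A)

/-- The distance from a point to a set: `inf {d x a : a ∈ A}`. -/
noncomputable def distPtSet {X : Type*} (d : X → X → ℝ) (x : X) (A : Set X) : ℝ :=
  sInf {r | ∃ a ∈ A, r = d x a}

/-- `d` is a b-metric on `X` with coefficient `s ≥ 1`. -/
def IsBMetric {X : Type*} (d : X → X → ℝ) (s : ℝ) : Prop :=
  1 ≤ s ∧ (∀ x y, 0 ≤ d x y) ∧ (∀ x y, d x y = 0 ↔ x = y) ∧ (∀ x y, d x y = d y x) ∧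
    (∀ x y z, d x y ≤ s * (d x z + d z y))

/-- `(X,d)` is a complete b-metric space with coefficient `s`. -/
def IsCompleteBMetric {X : Type*} (d : X → X → ℝ) (s : ℝ) : Prop :=
  IsBMetric d s ∧
    ∀ u : ℕ → X, (∀ ε > (0 : ℝ), ∃ N : ℕ, ∀ m ≥ N, ∀ n ≥ N, d (u m) (u n) < ε) →
      ∃ x : X, Tendsto (fun n => d (u n) x) atTop (𝓝 0)

/-- `ψ : [0,∞) → [0,∞)` is increasing, upper semicontinuous, `ψ 0 = 0`, `ψ t < t` for `t > 0`. -/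
def IsComparison (ψ : ℝ → ℝ) : Prop :=
  MonotoneOn ψ (Ici 0) ∧ UpperSemicontinuousOn ψ (Ici 0) ∧
    (∀ t ≥ (0 : ℝ), 0 ≤ ψ t) ∧ ψ 0 = 0 ∧ ∀ t > (0 : ℝ), ψ t < t

/-- `T` is a weak quasi-contraction: bounded orbits and
`d(Tx,Ty) ≤ ψ(diam O_T(x,y))` for some comparison function `ψ`. -/
def IsWeakQuasiContraction {X : Type*} (d : X → X → ℝ) (T : X → X) : Prop :=
  (∀ x y, BddAbove (distSet d (orb2 T x y))) ∧
    ∃ ψ : ℝ → ℝ, IsComparison ψ ∧ ∀ x y, d (T x) (T y) ≤ ψ (diamd d (orb2 T x y))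

/-- `E` is closed with respect to `d`-convergence. -/
def IsClosedD {X : Type*} (d : X → X → ℝ) (E : Set X) : Prop :=
  ∀ (u : ℕ → X) (x : X), (∀ n, u n ∈ E) →
    Tendsto (fun n => d (u n) x) atTop (𝓝 0) → x ∈ E

/-- `T` is O-b continuous: `x_n → x` implies `diam O_T(x_n, x) → 0`. -/
def OBContinuous {X : Type*} (d : X → X → ℝ) (T : X → X) : Prop :=
  ∀ (u : ℕ → X) (x : X), Tendsto (fun n => d (u n) x) atTop (𝓝 0) →
    Tendsto (fun n => diamd d (orb2 T (u n) x)) atTop (𝓝 0)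

/-- The composition `T_{f n} ∘ T_{f (n-1)} ∘ ⋯ ∘ T_{f 0}`. -/
def compSeq {X : Type*} (T : ℕ → X → X) (f : ℕ → ℕ) : ℕ → X → X
  | 0 => T (f 0)
  | n + 1 => fun x => T (f (n + 1)) (compSeq T f n x)

/-- Property (F): `𝓕` is closed under shifts by positive naturals. -/
def PropF (𝓕 : Set (ℕ → ℕ)) : Prop :=
  ∀ f ∈ 𝓕, ∀ p : ℕ, 0 < p → (fun i => f (i + p)) ∈ 𝓕

private lemma compSeq_succ' {X : Type*} (T : ℕ → X → X) (f : ℕ → ℕ) :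
    ∀ (n : ℕ) (x : X),
      compSeq T f (n + 1) x = compSeq T (fun k => f (k + 1)) n (T (f 0) x) := by
  intro n
  induction n with
  | zero => intro x; rfl
  | succ n ih =>
      intro x
      show T (f (n + 1 + 1)) (compSeq T f (n + 1) x) = _
      rw [ih]; rfl

theorem stmt0 {X : Type*} (d : X → X → ℝ) (s : ℝ)
    (hX : IsCompleteBMetric d s)
    (E : Set X) (hE : E.Nonempty) (hEcl : IsClosedD d E)
    (T : ℕ → X → X) (hT : ∀ i : ℕ, IsWeakQuasiContraction d (T i))
    (hTE : ∀ i : ℕ, ∀ e ∈ E, T i e ∈ E)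
    (𝓕 : Set (ℕ → ℕ)) (h𝓕 : 𝓕.Nonempty) (hF : PropF 𝓕)
    (hmono : ∀ f ∈ 𝓕, ∀ i j : ℕ, ∀ x y : X,
      diamd d (orb2 (T (f j)) (T (f i) x) (T (f i) y)) ≤ diamd d (orb2 (T (f j)) x y))
    (hP1 : ∀ ε > (0 : ℝ), ∃ n : ℕ, ∀ f ∈ 𝓕, ∀ x : X,
      distPtSet d (compSeq T f n x) E < ε) :
    ∀ ε > (0 : ℝ), ∃ δ > (0 : ℝ), ∃ n₀ : ℕ, ∀ f ∈ 𝓕, ∀ x : ℕ → X,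
      (∀ i j : ℕ, diamd d (orb2 (T (f j)) (x (i + 1)) (T (f i) (x i))) ≤ δ) →
      ∀ i ≥ n₀, distPtSet d (x i) E < ε := by
  obtain ⟨⟨hs, hd0, _hdeq, _hdsym, htri⟩, _hcomp⟩ := hX
  have hs0 : (0:ℝ) < s := lt_of_lt_of_le one_pos hs
  -- distance between base points is at most the diameter of the double orbit
  have hA : ∀ (k : ℕ) (a b : X), d a b ≤ diamd d (orb2 (T k) a b) := by
    intro k a b
    apply le_csSup ((hT k).1 a b)
    exact ⟨a, Or.inl ⟨0, rfl⟩, b, Or.inr ⟨0, rfl⟩, rfl⟩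
  -- iterated monotonicity
  have hC : ∀ g ∈ 𝓕, ∀ (n j : ℕ) (u v : X),
      diamd d (orb2 (T (g j)) (compSeq T g n u) (compSeq T g n v)) ≤
        diamd d (orb2 (T (g j)) u v) := by
    intro g hg n j u v
    induction n with
    | zero => exact hmono g hg 0 j u v
    | succ n ih => exact le_trans (hmono g hg (n+1) j _ _) ih
  intro ε hε
  obtain ⟨n, hn⟩ := hP1 (ε / (2*s)) (by positivity)
  let c : ℕ → ℝ := fun m => Nat.rec 1 (fun _ cm => s * (cm + 1)) m
  have hcsucc : ∀ m, c (m+1) = s * (c m + 1) := fun m => rfl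
  have hc1 : ∀ m, 1 ≤ c m := by
    intro m
    induction m with
    | zero => exact le_refl 1
    | succ m ih => rw [hcsucc]; nlinarith
  have hcpos : 0 < c n := lt_of_lt_of_le one_pos (hc1 n)
  refine ⟨ε / (2 * s * c n), by positivity, n + 2, ?_⟩
  intro f hf x hx
  set δ := ε / (2 * s * c n) with hδdef
  have hδpos : 0 < δ := by positivity
  -- main shadowing estimate
  have hmain : ∀ (m i : ℕ),
      d (x (i + m + 1)) (compSeq T (fun k => f (k + i)) m (x i)) ≤ c m * δ := by
    intro m
    induction m with
    | zero =>
      intro i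
      have h1 : compSeq T (fun k => f (k + i)) 0 (x i) = T (f i) (x i) := by
        simp [compSeq]
      rw [h1]
      have := le_trans (hA (f i) (x (i+1)) (T (f i) (x i))) (hx i i)
      calc d (x (i + 0 + 1)) (T (f i) (x i)) ≤ δ := this
        _ = c 0 * δ := by simp [c]
    | succ m ih =>
      intro i
      have hg𝓕 : (fun k => f (k + (i+1))) ∈ 𝓕 := hF f hf (i+1) (Nat.succ_pos i)
      have hB : compSeq T (fun k => f (k + i)) (m+1) (x i)
          = compSeq T (fun k => f (k + (i+1))) m (T (f i) (x i)) := by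
        rw [compSeq_succ' T (fun k => f (k + i)) m (x i)]
        have hfun : (fun k => f (k + 1 + i)) = (fun k => f (k + (i+1))) := by
          funext k; congr 1; omega
        have h0 : f (0 + i) = f i := by congr 1; omega
        rw [hfun, h0]
      have key : d (compSeq T (fun k => f (k + (i+1))) m (x (i+1)))
          (compSeq T (fun k => f (k + (i+1))) m (T (f i) (x i))) ≤ δ := by
        refine le_trans (hA (f (0 + (i+1))) _ _)
          (le_trans (hC _ hg𝓕 m 0 _ _) ?_)
        exact hx i (0 + (i+1))
      have h1 := ih (i+1)
      have hidx : (i+1) + m + 1 = i + (m+1) + 1 := by omega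
      rw [hidx] at h1
      calc d (x (i + (m+1) + 1)) (compSeq T (fun k => f (k + i)) (m+1) (x i))
          = d (x (i + (m+1) + 1))
              (compSeq T (fun k => f (k + (i+1))) m (T (f i) (x i))) := by rw [hB]
        _ ≤ s * (d (x (i + (m+1) + 1))
              (compSeq T (fun k => f (k + (i+1))) m (x (i+1))) +
            d (compSeq T (fun k => f (k + (i+1))) m (x (i+1)))
              (compSeq T (fun k => f (k + (i+1))) m (T (f i) (x i)))) := htri _ _ _
        _ ≤ s * (c m * δ + δ) :=
            mul_le_mul_of_nonneg_left (add_le_add h1 key) hs0.le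
        _ = c (m+1) * δ := by rw [hcsucc]; ring
  intro i hi
  obtain ⟨i₀, rfl⟩ : ∃ i₀, i = (i₀ + 1) + n + 1 := ⟨i - n - 2, by omega⟩
  have hg𝓕 : (fun k => f (k + (i₀+1))) ∈ 𝓕 := hF f hf (i₀+1) (Nat.succ_pos i₀)
  set z := compSeq T (fun k => f (k + (i₀+1))) n (x (i₀+1)) with hz
  have hdz : d (x ((i₀+1) + n + 1)) z ≤ c n * δ := hmain n (i₀+1)
  have hzE : distPtSet d z E < ε / (2*s) := hn _ hg𝓕 (x (i₀+1))
  obtain ⟨e₀, he₀⟩ := hE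
  have hne : {r | ∃ a ∈ E, r = d z a}.Nonempty := ⟨d z e₀, e₀, he₀, rfl⟩
  obtain ⟨r, ⟨e, he, rfl⟩, hre⟩ := exists_lt_of_csInf_lt hne hzE
  have hle : distPtSet d (x ((i₀+1) + n + 1)) E ≤ d (x ((i₀+1) + n + 1)) e := by
    apply csInf_le
    · exact ⟨0, fun r ⟨a, _, hr⟩ => hr ▸ hd0 _ _⟩
    · exact ⟨e, he, rfl⟩
  have htr : d (x ((i₀+1) + n + 1)) e ≤ s * (d (x ((i₀+1) + n + 1)) z + d z e) :=
    htri _ _ _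
  have hkey : s * (c n) * δ = ε / 2 := by
    rw [hδdef]; field_simp
  have hs0' : s ≠ 0 := ne_of_gt hs0
  calc distPtSet d (x ((i₀+1) + n + 1)) E ≤ d (x ((i₀+1) + n + 1)) e := hle
    _ ≤ s * (d (x ((i₀+1) + n + 1)) z + d z e) := htr
    _ < s * (c n * δ + ε / (2*s)) := by
        apply mul_lt_mul_of_pos_left _ hs0
        exact add_lt_add_of_le_of_lt hdz hre
    _ = ε := by field_simp at hkey ⊢; nlinarith [hkey]
end

section
/- Let (X,d) be a complete b-metric space with coefficient s ≥ 1 and let E be a nonempty closed subset of X. For each i ∈ ℕ₀ let T_i : X → X be a weak quasi-contraction with T_i(E) ⊆ E, and suppose that diam O_{T_{f(j)}}(T_{f(i)}x, T_{f(i)}y) ≤ diam O_{T_{f(j)}}(x,y) for all x,y ∈ X, all f ∈ 𝔉 and all i,j ∈ ℕ₀, where 𝔉 is a nonempty set of mappings f : ℕ₀ → ℕ₀ with property (F). Assume property (P1): for each ε > 0 there exists n_ε ∈ ℕ such that for each f ∈ 𝔉 and each x ∈ X one has d(T_{f(n_ε)}T_{f(n_ε−1)}⋯T_{f(1)}T_{f(0)}x,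 E) < ε. Let {δ_i}_{i=0}^∞ be a sequence of positive numbers with lim_{i→∞} δ_i = 0. Then for each ε > 0 there exists n̄ ∈ ℕ such that for each f ∈ 𝔉 and each sequence {x_i}_{i=0}^∞ ⊆ X satisfying diam O_{T_{f(j)}}(x_{i+1}, T_{f(i)}x_i) ≤ δ_i for all i,j ∈ ℕ₀, one has d(x_i, E) < ε for all i ≥ n̄. -/
open Set Filter Topology

/- auxiliary lemmas -/

lemma mem_orb_self {X : Type*} (T : X → X) (x : X) : x ∈ orb T x := ⟨0, rfl⟩

lemma aux_dist_le_diamd {X : Type*} (d : X → X → ℝ) {A : Set X}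
    (h : BddAbove (distSet d A)) {a b : X} (ha : a ∈ A) (hb : b ∈ A) :
    d a b ≤ diamd d A :=
  le_csSup h ⟨a, ha, b, hb, rfl⟩

lemma aux_diamd_nonneg {X : Type*} (d : X → X → ℝ) {s : ℝ} (hbm : IsBMetric d s)
    {A : Set X} (h : BddAbove (distSet d A)) {a : X} (ha : a ∈ A) :
    0 ≤ diamd d A := by
  have := aux_dist_le_diamd d h ha ha
  have hz : d a a = 0 := (hbm.2.2.1 a a).2 rfl
  linarith

/-- b-metric-like triangle inequality for orbit diameters. -/
lemma aux_diamd_tri {X : Type*} (d : X → X → ℝ) {s : ℝ} (hbm : IsBMetric d s)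
    (T : X → X) (hbdd : ∀ x y, BddAbove (distSet d (orb2 T x y))) (a b c : X) :
    diamd d (orb2 T a c) ≤ s * (diamd d (orb2 T a b) + diamd d (orb2 T b c)) := by
  obtain ⟨hs, hpos, hzero, hsymm, htri⟩ := hbm
  have hab0 : 0 ≤ diamd d (orb2 T a b) :=
    aux_diamd_nonneg d ⟨hs, hpos, hzero, hsymm, htri⟩ (hbdd a b)
      (Or.inl (mem_orb_self T a))
  have hbc0 : 0 ≤ diamd d (orb2 T b c) :=
    aux_diamd_nonneg d ⟨hs, hpos, hzero, hsymm, htri⟩ (hbdd b c)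
      (Or.inl (mem_orb_self T b))
  apply Real.sSup_le
  · rintro r ⟨u, hu, v, hv, rfl⟩
    have hb1 : b ∈ orb2 T a b := Or.inr (mem_orb_self T b)
    have hb2 : b ∈ orb2 T b c := Or.inl (mem_orb_self T b)
    rcases hu with hu | hu <;> rcases hv with hv | hv
    · have : d u v ≤ diamd d (orb2 T a b) :=
        aux_dist_le_diamd d (hbdd a b) (Or.inl hu) (Or.inl hv)
      nlinarith
    · have h1 : d u b ≤ diamd d (orb2 T a b) :=
        aux_dist_le_diamd d (hbdd a b) (Or.inl hu) hb1
      have h2 : d b v ≤ diamd d (orb2 T b c) :=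
        aux_dist_le_diamd d (hbdd b c) hb2 (Or.inr hv)
      calc d u v ≤ s * (d u b + d b v) := htri u v b
        _ ≤ s * (diamd d (orb2 T a b) + diamd d (orb2 T b c)) := by nlinarith
    · have h1 : d u b ≤ diamd d (orb2 T b c) := by
        rw [hsymm]
        exact aux_dist_le_diamd d (hbdd b c) hb2 (Or.inr hu)
      have h2 : d b v ≤ diamd d (orb2 T a b) := by
        rw [hsymm]
        exact aux_dist_le_diamd d (hbdd a b) (Or.inl hv) hb1
      calc d u v ≤ s * (d u b + d b v) := htri u v b
        _ ≤ s * (diamd d (orb2 T a b) + diamd d (orb2 T b c)) := by nlinarith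
    · have : d u v ≤ diamd d (orb2 T b c) :=
        aux_dist_le_diamd d (hbdd b c) (Or.inr hu) (Or.inr hv)
      nlinarith
  · nlinarith

theorem stmt1 {X : Type*} (d : X → X → ℝ) (s : ℝ)
    (hX : IsCompleteBMetric d s)
    (E : Set X) (hE : E.Nonempty) (hEcl : IsClosedD d E)
    (T : ℕ → X → X) (hT : ∀ i : ℕ, IsWeakQuasiContraction d (T i))
    (hTE : ∀ i : ℕ, ∀ e ∈ E, T i e ∈ E)
    (𝓕 : Set (ℕ → ℕ)) (h𝓕 : 𝓕.Nonempty) (hF : PropF 𝓕)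
    (hmono : ∀ f ∈ 𝓕, ∀ i j : ℕ, ∀ x y : X,
      diamd d (orb2 (T (f j)) (T (f i) x) (T (f i) y)) ≤ diamd d (orb2 (T (f j)) x y))
    (hP1 : ∀ ε > (0 : ℝ), ∃ n : ℕ, ∀ f ∈ 𝓕, ∀ x : X,
      distPtSet d (compSeq T f n x) E < ε)
    (δs : ℕ → ℝ) (hδs : ∀ i, 0 < δs i)
    (hδs0 : Tendsto δs atTop (𝓝 0)) :
    ∀ ε > (0 : ℝ), ∃ nbar : ℕ, ∀ f ∈ 𝓕, ∀ x : ℕ → X,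
      (∀ i j : ℕ, diamd d (orb2 (T (f j)) (x (i + 1)) (T (f i) (x i))) ≤ δs i) →
      ∀ i ≥ nbar, distPtSet d (x i) E < ε := by
  obtain ⟨hbm, _⟩ := hX
  obtain ⟨hs, hpos, hzero, hsymm, htri⟩ := hbm
  have hs0 : (0:ℝ) < s := lt_of_lt_of_le one_pos hs
  intro ε hε
  -- constants
  obtain ⟨N, hN⟩ := hP1 (ε / (4 * s)) (by positivity)
  set C : ℝ := (2 * s) ^ (N + 1) with hC
  have hC1 : (1:ℝ) ≤ C := one_le_pow₀ (by linarith)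
  have hC0 : (0:ℝ) < C := by linarith
  set η : ℝ := ε / (4 * s * C) with hη
  have hη0 : 0 < η := by positivity
  -- tail of δs below η
  obtain ⟨p₀, hp₀⟩ := (Metric.tendsto_atTop.mp hδs0) η hη0
  refine ⟨p₀ + N + 1, ?_⟩
  intro f hf x hx i hi
  set p : ℕ := i - (N + 1) with hp
  have hip : i = p + 1 + N := by omega
  have hpp₀ : p₀ ≤ p := by omega
  have hδη : ∀ m, p ≤ m → δs m ≤ η := by
    intro m hm
    have := hp₀ m (le_trans hpp₀ hm)
    rw [Real.dist_eq, sub_zero, abs_of_pos (hδs m)] at this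
    linarith
  -- the shifted sequence
  set g : ℕ → ℕ := fun k => f (k + p) with hg
  have hgF : g ∈ 𝓕 := by
    rcases Nat.eq_zero_or_pos p with h0 | h0
    · have : g = f := by funext k; simp [hg, h0]
      rw [this]; exact hf
    · exact hF f hf p h0
  -- key induction: error propagation
  have key : ∀ k : ℕ, ∀ j : ℕ,
      diamd d (orb2 (T (f j)) (x (p + 1 + k)) (compSeq T g k (x p))) ≤ η * (2 * s) ^ (k + 1) := by
    intro k
    induction k with
    | zero =>
      intro j
      have h1 : compSeq T g 0 (x p) = T (f p) (x p) := by
        show T (g 0) (x p) = _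
        simp [hg]
      rw [h1]
      have := hx p j
      have h2 : δs p ≤ η := hδη p le_rfl
      have h3 : η * 1 ≤ η * (2 * s) ^ (0 + 1) := by
        apply mul_le_mul_of_nonneg_left _ (le_of_lt hη0)
        simpa using (by linarith : (1:ℝ) ≤ 2 * s)
      calc diamd d (orb2 (T (f j)) (x (p + 1 + 0)) (T (f p) (x p)))
          = diamd d (orb2 (T (f j)) (x (p + 1)) (T (f p) (x p))) := by norm_num
        _ ≤ δs p := this
        _ ≤ η := h2
        _ ≤ η * (2 * s) ^ (0 + 1) := by linarith
    | succ k ih =>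
      intro j
      have hcomp : compSeq T g (k + 1) (x p) = T (f (p + 1 + k)) (compSeq T g k (x p)) := by
        show T (g (k + 1)) _ = _
        have : k + 1 + p = p + 1 + k := by omega
        simp [hg, this]
      rw [hcomp]
      set m : ℕ := p + 1 + k with hm
      set z : X := compSeq T g k (x p) with hz
      -- triangle via the middle point T (f m) (x m)
      have htr := aux_diamd_tri d ⟨hs, hpos, hzero, hsymm, htri⟩ (T (f j)) (hT (f j)).1
        (x (p + 1 + (k + 1))) (T (f m) (x m)) (T (f m) z)
      have h1 : diamd d (orb2 (T (f j)) (x (p + 1 + (k + 1))) (T (f m) (x m))) ≤ δs m := by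
        have := hx m j
        have : diamd d (orb2 (T (f j)) (x (m + 1)) (T (f m) (x m))) ≤ δs m := this
        have he : m + 1 = p + 1 + (k + 1) := by omega
        rwa [he] at this
      have h2 : diamd d (orb2 (T (f j)) (T (f m) (x m)) (T (f m) z)) ≤
          diamd d (orb2 (T (f j)) (x m) z) := hmono f hf m j (x m) z
      have h3 : diamd d (orb2 (T (f j)) (x m) z) ≤ η * (2 * s) ^ (k + 1) := ih j
      have hδ : δs m ≤ η := hδη m (by omega)
      have hpow1 : (1:ℝ) ≤ (2 * s) ^ (k + 1) := one_le_pow₀ (by linarith)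
      have hpowpos : (0:ℝ) < (2 * s) ^ (k + 1) := by positivity
      calc diamd d (orb2 (T (f j)) (x (p + 1 + (k + 1))) (T (f m) z))
          ≤ s * (diamd d (orb2 (T (f j)) (x (p + 1 + (k + 1))) (T (f m) (x m))) +
              diamd d (orb2 (T (f j)) (T (f m) (x m)) (T (f m) z))) := htr
        _ ≤ s * (δs m + η * (2 * s) ^ (k + 1)) := by nlinarith
        _ ≤ s * (η + η * (2 * s) ^ (k + 1)) := by nlinarith
        _ ≤ η * (2 * s) ^ (k + 1 + 1) := by
            have hps : (2*s) ^ (k+1+1) = (2*s)^(k+1) * (2*s) := pow_succ _ _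
            nlinarith [mul_nonneg (mul_nonneg hs0.le hη0.le) (sub_nonneg.mpr hpow1)]
  -- conclude
  have hdxz : d (x i) (compSeq T g N (x p)) ≤ η * C := by
    have hk := key N 0
    rw [← hip] at hk
    have hb : BddAbove (distSet d (orb2 (T (f 0)) (x i) (compSeq T g N (x p)))) :=
      (hT (f 0)).1 _ _
    have hle := aux_dist_le_diamd d hb (Or.inl (mem_orb_self _ (x i)))
      (Or.inr (mem_orb_self _ (compSeq T g N (x p))))
    calc d (x i) (compSeq T g N (x p))
        ≤ diamd d (orb2 (T (f 0)) (x i) (compSeq T g N (x p))) := hle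
      _ ≤ η * (2 * s) ^ (N + 1) := hk
      _ = η * C := by rw [hC]
  -- point of E near z
  have hPz := hN g hgF (x p)
  have hne : {r | ∃ a ∈ E, r = d (compSeq T g N (x p)) a}.Nonempty := by
    obtain ⟨e, he⟩ := hE
    exact ⟨d (compSeq T g N (x p)) e, e, he, rfl⟩
  obtain ⟨r, ⟨e, he, rfl⟩, hre⟩ := exists_lt_of_csInf_lt hne hPz
  have hxe : d (x i) e ≤ s * (d (x i) (compSeq T g N (x p)) + d (compSeq T g N (x p)) e) :=
    htri _ _ _
  have hfin : d (x i) e < ε := by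
    have hηC : η * C = ε / (4 * s) := by
      rw [hη]; field_simp
    have h1 : d (x i) (compSeq T g N (x p)) ≤ ε / (4 * s) := hηC ▸ hdxz
    have h2 : s * (ε / (4 * s)) = ε / 4 := by field_simp
    nlinarith [mul_le_mul_of_nonneg_left h1 hs0.le, mul_le_mul_of_nonneg_left hre.le hs0.le]
  have hbdd : BddBelow {r | ∃ a ∈ E, r = d (x i) a} := by
    refine ⟨0, ?_⟩
    rintro r ⟨a, _, rfl⟩
    exact hpos _ _
  calc distPtSet d (x i) E ≤ d (x i) e := csInf_le hbdd ⟨e, he, rfl⟩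
    _ < ε := hfin
end

section
/- Let (X,d) be a complete b-metric space with coefficient s ≥ 1 and fix x ∈ X; set E = {x}. For each i ∈ ℕ₀ let T_i : X → X be a weak quasi-contraction with T_i(x) = x, and suppose that diam O_{T_{f(j)}}(T_{f(i)}u, T_{f(i)}v) ≤ diam O_{T_{f(j)}}(u,v) for all u,v ∈ X, all f ∈ 𝔉 and all i,j ∈ ℕ₀, where 𝔉 is a nonempty set of mappings f : ℕ₀ → ℕ₀ with property (F). Assume that for each ε > 0 there exists n_ε ∈ ℕ such that for each f ∈ 𝔉 and each u ∈ X one has d(T_{f(n_ε)}T_{f(n_ε−1)}⋯T_{f(1)}T_{f(0)}u, x) < ε. Let {δ_i}_{i=0}^∞ be a sequence of positive numbers with lim_{i→∞} δ_i = 0. Then for each ε > 0 there exists n̆ ∈ ℕ such that for each f ∈ 𝔉 and each sequence {x_i}_{i=0}^∞ ⊆ X satisfying diam O_{T_{f(j)}}(x_{i+1}, T_{f(i)}x_i) ≤ δ_i for all i,j ∈ ℕ₀, one has d(x_i, x) < ε for all i ≥ n̆. -/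
open Set Filter Topology

/-- Auxiliary: apply `T (f a), T (f (a+1)), …, T (f (a+k-1))` in order. -/
def chain' {X : Type*} (T : ℕ → X → X) (f : ℕ → ℕ) : ℕ → ℕ → X → X
  | _, 0, u => u
  | a, k+1, u => chain' T f (a+1) k (T (f a) u)

lemma chain'_succ {X : Type*} (T : ℕ → X → X) (f : ℕ → ℕ) :
    ∀ (k a : ℕ) (u : X), chain' T f a (k+1) u = T (f (a + k)) (chain' T f a k u) := by
  intro k
  induction k with
  | zero => intro a u; simp [chain']
  | succ k ih =>
    intro a u
    show chain' T f (a+1) (k+1) (T (f a) u) = _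
    rw [ih (a+1) (T (f a) u)]
    have : a + 1 + k = a + (k+1) := by omega
    rw [this]
    rfl

lemma chain'_eq_compSeq {X : Type*} (T : ℕ → X → X) (f : ℕ → ℕ) :
    ∀ (k p : ℕ) (u : X), chain' T f p (k+1) u = compSeq T (fun i => f (i + p)) k u := by
  intro k
  induction k with
  | zero => intro p u; simp [chain', compSeq]
  | succ k ih =>
    intro p u
    rw [chain'_succ, ih]
    show T (f (p + (k+1))) _ = T (f (k + 1 + p)) _
    have : p + (k+1) = k + 1 + p := by omega
    rw [this]

lemma dist_le_diamd {X : Type*} (d : X → X → ℝ) (A : X → X) (u v : X)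
    (hbdd : BddAbove (distSet d (orb2 A u v))) : d u v ≤ diamd d (orb2 A u v) :=
  le_csSup hbdd ⟨u, Or.inl ⟨0, rfl⟩, v, Or.inr ⟨0, rfl⟩, rfl⟩

lemma chain'_diam {X : Type*} (d : X → X → ℝ) (T : ℕ → X → X) (f : ℕ → ℕ)
    (hmono : ∀ i j : ℕ, ∀ u v : X,
      diamd d (orb2 (T (f j)) (T (f i) u) (T (f i) v)) ≤ diamd d (orb2 (T (f j)) u v)) :
    ∀ (k a j : ℕ) (u v : X),
      diamd d (orb2 (T (f j)) (chain' T f a k u) (chain' T f a k v)) ≤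
        diamd d (orb2 (T (f j)) u v) := by
  intro k
  induction k with
  | zero => intro a j u v; exact le_rfl
  | succ k ih =>
    intro a j u v
    calc diamd d (orb2 (T (f j)) (chain' T f (a+1) k (T (f a) u)) (chain' T f (a+1) k (T (f a) v)))
        ≤ diamd d (orb2 (T (f j)) (T (f a) u) (T (f a) v)) := ih (a+1) j _ _
      _ ≤ diamd d (orb2 (T (f j)) u v) := hmono a j u v

lemma tele_bound {X : Type*} (d : X → X → ℝ) (s : ℝ) (hs : 1 ≤ s)
    (hnn : ∀ x y, 0 ≤ d x y) (hdd : ∀ x, d x x = 0)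
    (htri : ∀ x y z, d x y ≤ s * (d x z + d z y)) (a : ℕ → X) :
    ∀ k, d (a k) (a 0) ≤ s ^ k * ∑ m ∈ Finset.range k, d (a (m+1)) (a m) := by
  intro k
  induction k with
  | zero => simp [hdd]
  | succ k ih =>
    have hSnn : (0:ℝ) ≤ ∑ m ∈ Finset.range k, d (a (m+1)) (a m) :=
      Finset.sum_nonneg fun m _ => hnn _ _
    have ht : 0 ≤ d (a (k+1)) (a k) := hnn _ _
    have hs0 : (0:ℝ) ≤ s := by linarith
    have hsk : (1:ℝ) ≤ s ^ k := one_le_pow₀ hs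
    have h1 : d (a (k+1)) (a 0) ≤ s * (d (a (k+1)) (a k) + d (a k) (a 0)) := htri _ _ _
    have h2 : s * d (a k) (a 0) ≤ s * (s ^ k * ∑ m ∈ Finset.range k, d (a (m+1)) (a m)) :=
      mul_le_mul_of_nonneg_left ih hs0
    have key : s * d (a (k+1)) (a k) ≤ s ^ k * s * d (a (k+1)) (a k) := by
      nlinarith [mul_nonneg (mul_nonneg (sub_nonneg.2 hsk) hs0) ht]
    rw [Finset.sum_range_succ, pow_succ]
    nlinarith

theorem stmt2 {X : Type*} (d : X → X → ℝ) (s : ℝ)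
    (hX : IsCompleteBMetric d s)
    (x₀ : X)
    (T : ℕ → X → X) (hT : ∀ i : ℕ, IsWeakQuasiContraction d (T i))
    (hfix : ∀ i : ℕ, T i x₀ = x₀)
    (𝓕 : Set (ℕ → ℕ)) (h𝓕 : 𝓕.Nonempty) (hF : PropF 𝓕)
    (hmono : ∀ f ∈ 𝓕, ∀ i j : ℕ, ∀ u v : X,
      diamd d (orb2 (T (f j)) (T (f i) u) (T (f i) v)) ≤ diamd d (orb2 (T (f j)) u v))
    (hP1 : ∀ ε > (0 : ℝ), ∃ n : ℕ, ∀ f ∈ 𝓕, ∀ u : X,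
      d (compSeq T f n u) x₀ < ε)
    (δs : ℕ → ℝ) (hδs : ∀ i, 0 < δs i)
    (hδs0 : Tendsto δs atTop (𝓝 0)) :
    ∀ ε > (0 : ℝ), ∃ nbr : ℕ, ∀ f ∈ 𝓕, ∀ x : ℕ → X,
      (∀ i j : ℕ, diamd d (orb2 (T (f j)) (x (i + 1)) (T (f i) (x i))) ≤ δs i) →
      ∀ i ≥ nbr, d (x i) x₀ < ε := by
  obtain ⟨⟨s1, dnn, deq0, dsymm, dtri⟩, _⟩ := hX
  have hs0 : (0:ℝ) < s := lt_of_lt_of_le one_pos s1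
  have hdd : ∀ y : X, d y y = 0 := fun y => (deq0 y y).2 rfl
  intro ε hε
  obtain ⟨n, hn⟩ := hP1 (ε / (2*s)) (by positivity)
  set η : ℝ := ε / (2*s*((n+1) * s^(n+1))) with hηdef
  have hη : 0 < η := by positivity
  obtain ⟨N, hN⟩ := Filter.eventually_atTop.1 (hδs0.eventually (eventually_lt_nhds hη))
  refine ⟨N + n + 2, fun f hf x hx i hi => ?_⟩
  set p : ℕ := i - (n+1) with hpdef
  have hip : i = p + (n+1) := by omega
  have hpN : N ≤ p := by omega
  have hp0 : 0 < p := by omega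
  set a : ℕ → X := fun m => chain' T f (p+m) (n+1-m) (x (p+m)) with hadef
  have ha0 : a 0 = chain' T f p (n+1) (x p) := by simp [hadef]
  have hak : a (n+1) = x i := by
    have : n + 1 - (n+1) = 0 := by omega
    simp only [hadef, this]
    rw [← hip]; rfl
  -- bound each telescoping term
  have hterm : ∀ m < n+1, d (a (m+1)) (a m) ≤ η := by
    intro m hm
    have h1 : n + 1 - m = (n - m) + 1 := by omega
    have h2 : n + 1 - (m+1) = n - m := by omega
    have ham : a m = chain' T f (p+m+1) (n-m) (T (f (p+m)) (x (p+m))) := by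
      simp only [hadef, h1]; rfl
    have ham1 : a (m+1) = chain' T f (p+m+1) (n-m) (x (p+m+1)) := by
      simp only [hadef, h2]
      have : p + (m+1) = p + m + 1 := by omega
      rw [this]
    rw [ham, ham1]
    calc d (chain' T f (p+m+1) (n-m) (x (p+m+1)))
          (chain' T f (p+m+1) (n-m) (T (f (p+m)) (x (p+m))))
        ≤ diamd d (orb2 (T (f 0)) (chain' T f (p+m+1) (n-m) (x (p+m+1)))
            (chain' T f (p+m+1) (n-m) (T (f (p+m)) (x (p+m))))) :=
          dist_le_diamd d _ _ _ ((hT (f 0)).1 _ _)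
      _ ≤ diamd d (orb2 (T (f 0)) (x (p+m+1)) (T (f (p+m)) (x (p+m)))) :=
          chain'_diam d T f (hmono f hf) (n-m) (p+m+1) 0 _ _
      _ ≤ δs (p+m) := hx (p+m) 0
      _ ≤ η := le_of_lt (hN (p+m) (by omega))
  have htele := tele_bound d s s1 dnn hdd dtri a (n+1)
  have hS : ∑ m ∈ Finset.range (n+1), d (a (m+1)) (a m) ≤ (n+1) * η := by
    calc ∑ m ∈ Finset.range (n+1), d (a (m+1)) (a m)
        ≤ ∑ _m ∈ Finset.range (n+1), η :=
          Finset.sum_le_sum fun m hm => hterm m (Finset.mem_range.1 hm)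
      _ = (n+1) * η := by
          rw [Finset.sum_const, Finset.card_range]
          push_cast [nsmul_eq_mul]
          ring
  have hd1 : d (x i) (chain' T f p (n+1) (x p)) ≤ ε / (2*s) := by
    rw [← hak, ← ha0]
    have hpow : (0:ℝ) < s ^ (n+1) := by positivity
    have key : s ^ (n+1) * ((n+1 : ℝ) * η) = ε / (2*s) := by
      rw [hηdef]
      field_simp
    calc d (a (n+1)) (a 0) ≤ s ^ (n+1) * ∑ m ∈ Finset.range (n+1), d (a (m+1)) (a m) := htele
      _ ≤ s ^ (n+1) * ((n+1 : ℝ) * η) := by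
          apply mul_le_mul_of_nonneg_left _ (le_of_lt hpow)
          exact_mod_cast hS
      _ = ε / (2*s) := key
  have hd2 : d (chain' T f p (n+1) (x p)) x₀ < ε / (2*s) := by
    rw [chain'_eq_compSeq]
    exact hn _ (hF f hf p hp0) (x p)
  have hfin : s * (ε/(2*s) + ε/(2*s)) = ε := by
    field_simp
    ring
  calc d (x i) x₀ ≤ s * (d (x i) (chain' T f p (n+1) (x p)) +
        d (chain' T f p (n+1) (x p)) x₀) := dtri _ _ _
    _ < s * (ε/(2*s) + ε/(2*s)) := by
        apply mul_lt_mul_of_pos_left _ hs0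
        linarith
    _ = ε := hfin
end

section
/- Let X be the set of all sequences x = {x_i}_{i=1}^∞ of nonnegative real numbers such that Σ_{i=1}^∞ x_i ≤ 1, with d(x,y) = Σ_{i=1}^∞ |x_i − y_i|², and define T : X → X by T({x_i}_{i=1}^∞) = (x_2/2, x_3/2, x_4/2, …). Then T maps X into X, T induces bounded orbits, and with ψ(t) = t/3 one has d(Tx,Ty) ≤ ψ(diam O_T(x,y)) for all x,y ∈ X; in particular T is a weak quasi-contraction on (X,d). -/
open Set Filter Topology

/-- The set of all sequences of nonnegative reals with `∑ xᵢ ≤ 1`. -/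
def Xset : Set (ℕ → ℝ) := {x | (∀ i, 0 ≤ x i) ∧ Summable x ∧ (∑' i, x i) ≤ 1}

/-- `d(x,y) = ∑ |xᵢ - yᵢ|²`. -/
noncomputable def dseq (x y : ℕ → ℝ) : ℝ := ∑' i, |x i - y i| ^ 2

/-- `T(x₁,x₂,x₃,…) = (x₂/2, x₃/2, x₄/2, …)`. -/
noncomputable def Tshift (x : ℕ → ℝ) : ℕ → ℝ := fun i => x (i + 1) / 2

lemma tsum_shift_le {f : ℕ → ℝ} (hf : Summable f) (h0 : ∀ i, 0 ≤ f i) :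
    ∑' i, f (i + 1) ≤ ∑' i, f i := by
  have := (Summable.sum_add_tsum_nat_add 1 hf).symm
  simp at this
  have h2 : 0 ≤ f 0 := h0 0
  linarith [this]

lemma Tshift_mem {x : ℕ → ℝ} (hx : x ∈ Xset) : Tshift x ∈ Xset := by
  obtain ⟨h0, hs, hle⟩ := hx
  have hs' : Summable fun i => x (i + 1) := (summable_nat_add_iff 1).mpr hs
  refine ⟨fun i => div_nonneg (h0 _) (by norm_num), ?_, ?_⟩
  · exact hs'.div_const 2
  · have : (∑' i, x (i + 1) / 2) = (∑' i, x (i + 1)) / 2 := by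
      rw [tsum_div_const]
    simp only [Tshift]
    have h1 : ∑' i, x (i + 1) ≤ ∑' i, x i := tsum_shift_le hs h0
    have h2 : (0:ℝ) ≤ ∑' i, x (i+1) := tsum_nonneg fun i => h0 _
    rw [this]; linarith

lemma sq_abs_sub_le {a b : ℕ → ℝ} (ha : a ∈ Xset) (hb : b ∈ Xset) (i : ℕ) :
    |a i - b i| ^ 2 ≤ a i + b i := by
  obtain ⟨ha0, has, hale⟩ := ha
  obtain ⟨hb0, hbs, hble⟩ := hb
  have ha1 : a i ≤ 1 := le_trans (Summable.le_tsum has i fun j _ => ha0 j) hale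
  have hb1 : b i ≤ 1 := le_trans (Summable.le_tsum hbs i fun j _ => hb0 j) hble
  have h1 : |a i - b i| ^ 2 = (a i - b i) ^ 2 := sq_abs _
  have h2 : (a i - b i)^2 ≤ (a i)^2 + (b i)^2 := by nlinarith [mul_nonneg (ha0 i) (hb0 i)]
  nlinarith [sq_nonneg (a i), sq_nonneg (b i), ha0 i, hb0 i]

lemma dsummable {a b : ℕ → ℝ} (ha : a ∈ Xset) (hb : b ∈ Xset) :
    Summable fun i => |a i - b i| ^ 2 := by
  refine Summable.of_nonneg_of_le (fun i => by positivity) (sq_abs_sub_le ha hb) ?_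
  exact ha.2.1.add hb.2.1

lemma dseq_le_two {a b : ℕ → ℝ} (ha : a ∈ Xset) (hb : b ∈ Xset) : dseq a b ≤ 2 := by
  have h := Summable.tsum_le_tsum (sq_abs_sub_le ha hb) (dsummable ha hb) (ha.2.1.add hb.2.1)
  have h2 : ∑' i, (a i + b i) = (∑' i, a i) + ∑' i, b i := Summable.tsum_add ha.2.1 hb.2.1
  rw [dseq]
  calc _ ≤ _ := h
  _ ≤ 2 := by rw [h2]; linarith [ha.2.2, hb.2.2]

lemma dseq_nonneg (a b : ℕ → ℝ) : 0 ≤ dseq a b := tsum_nonneg fun i => by positivity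

lemma dseq_Tshift {a b : ℕ → ℝ} (ha : a ∈ Xset) (hb : b ∈ Xset) :
    dseq (Tshift a) (Tshift b) ≤ dseq a b / 4 := by
  have hsum := dsummable ha hb
  have hsum' : Summable fun i => |a (i+1) - b (i+1)| ^ 2 := (summable_nat_add_iff 1).mpr hsum
  have key : ∀ i, |Tshift a i - Tshift b i| ^ 2 = |a (i+1) - b (i+1)| ^ 2 / 4 := by
    intro i
    simp only [Tshift]
    rw [show a (i+1)/2 - b (i+1)/2 = (a (i+1) - b (i+1))/2 by ring, abs_div,
      div_pow, abs_two]
    norm_num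
  rw [dseq]
  simp_rw [key]
  rw [tsum_div_const]
  have h1 : ∑' i, |a (i+1) - b (i+1)| ^ 2 ≤ dseq a b := tsum_shift_le hsum (fun i => by positivity)
  linarith

lemma orb2_mem {x y a : ℕ → ℝ} (hx : x ∈ Xset) (hy : y ∈ Xset)
    (ha : a ∈ orb2 Tshift x y) : a ∈ Xset := by
  have key : ∀ (z : ℕ → ℝ), z ∈ Xset → ∀ n, Tshift^[n] z ∈ Xset := by
    intro z hz n
    induction n with
    | zero => simpa using hz
    | succ n ih => rw [Function.iterate_succ_apply']; exact Tshift_mem ih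
  rcases ha with ⟨n, rfl⟩ | ⟨n, rfl⟩
  · exact key x hx n
  · exact key y hy n

lemma mem_orb2_self_left (T : (ℕ → ℝ) → (ℕ → ℝ)) (x y : ℕ → ℝ) : x ∈ orb2 T x y :=
  Or.inl ⟨0, rfl⟩

lemma mem_orb2_self_right (T : (ℕ → ℝ) → (ℕ → ℝ)) (x y : ℕ → ℝ) : y ∈ orb2 T x y :=
  Or.inr ⟨0, rfl⟩

lemma bdd_distSet {x y : ℕ → ℝ} (hx : x ∈ Xset) (hy : y ∈ Xset) :
    BddAbove (distSet dseq (orb2 Tshift x y)) := by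
  refine ⟨2, fun r hr => ?_⟩
  obtain ⟨a, ha, b, hb, rfl⟩ := hr
  exact dseq_le_two (orb2_mem hx hy ha) (orb2_mem hx hy hb)

theorem stmt4 :
    (∀ x ∈ Xset, Tshift x ∈ Xset) ∧
    (∀ x ∈ Xset, ∀ y ∈ Xset, BddAbove (distSet dseq (orb2 Tshift x y))) ∧
    IsComparison (fun t => t / 3) ∧
    (∀ x ∈ Xset, ∀ y ∈ Xset,
      dseq (Tshift x) (Tshift y) ≤ (diamd dseq (orb2 Tshift x y)) / 3) := by
  refine ⟨fun x hx => Tshift_mem hx, fun x hx y hy => bdd_distSet hx hy, ?_, ?_⟩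
  · refine ⟨fun a _ b _ hab => by dsimp; linarith, ?_, fun t ht => by dsimp; linarith,
      by norm_num, fun t ht => by dsimp; linarith⟩
    exact (Continuous.upperSemicontinuous (by continuity)).upperSemicontinuousOn _
  · intro x hx y hy
    have hbdd := bdd_distSet hx hy
    have hxy : dseq x y ≤ diamd dseq (orb2 Tshift x y) :=
      le_csSup hbdd ⟨x, mem_orb2_self_left _ _ _, y, mem_orb2_self_right _ _ _, rfl⟩
    have hd0 : 0 ≤ diamd dseq (orb2 Tshift x y) := le_trans (dseq_nonneg x y) hxy
    have h1 := dseq_Tshift hx hy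
    linarith
end

section
/- Let (X,d) be a complete b-metric space with coefficient s ≥ 1, let θ ∈ X be a fixed element, and let E be a nonempty, bounded and closed subset of X. For each i ∈ ℕ₀ let T_i : X → X be a weak quasi-contraction that is O-b continuous, and suppose diam O_{T_j}(T_i x, T_i y) ≤ diam O_{T_j}(x,y) for all x,y ∈ X and all i,j ∈ ℕ₀. Let 𝔉 be a nonempty set of mappings f : ℕ₀ → ℕ₀ with property (F). Assume (P3): for each e ∈ E and each i ∈ ℕ₀ there exists e′ ∈ E with T_i(e′) = e; and (P4): for each ε, K > 0 there exists n_{ε,K} ∈ ℕ such that for each f ∈ 𝔉 and each x ∈ X with diam O_{T_i}(x, θ) ≤ K/s for all i ∈ ℕ₀, one has d(T_{f(n_{ε,K})}T_{f(n_{ε,K}−1)}⋯T_{f(1)}T_{f(0)}x, E) < ε. Then for each ε, K > 0 there exist δ > 0 and n̂ ∈ ℕ such that for each f ∈ 𝔉 and each sequence {x_i}_{i=0}^∞ ⊆ X satisfying diam O_{T_i}(x_0, θ) ≤ K/s for all i ∈ ℕ₀ and diam O_{T_{f(j)}}(x_{i+1}, T_{f(i)}x_i) ≤ δ for all i,j ∈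 ℕ₀, one has d(x_i, E) < ε for all i ≥ n̂. -/
open Set Filter Topology

section AuxLemmas

variable {X : Type*}

lemma diamd_nonneg' (d : X → X → ℝ) (h0 : ∀ x y, 0 ≤ d x y) (A : Set X) :
    0 ≤ diamd d A :=
  Real.sSup_nonneg (by rintro r ⟨a, -, b, -, rfl⟩; exact h0 a b)

lemma le_diamd' (d : X → X → ℝ) {A : Set X} {a b : X} (ha : a ∈ A) (hb : b ∈ A)
    (hbdd : BddAbove (distSet d A)) : d a b ≤ diamd d A :=
  le_csSup hbdd ⟨a, ha, b, hb, rfl⟩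

lemma diamd_le' (d : X → X → ℝ) {A : Set X} {r : ℝ} (hr : 0 ≤ r)
    (h : ∀ a ∈ A, ∀ b ∈ A, d a b ≤ r) : diamd d A ≤ r :=
  Real.sSup_le (by rintro t ⟨a, ha, b, hb, rfl⟩; exact h a ha b hb) hr

lemma diamd_mono' (d : X → X → ℝ) (h0 : ∀ x y, 0 ≤ d x y) {A B : Set X} (hAB : A ⊆ B)
    (hbdd : BddAbove (distSet d B)) : diamd d A ≤ diamd d B := by
  refine Real.sSup_le ?_ (diamd_nonneg' d h0 B)
  rintro t ⟨a, ha, b, hb, rfl⟩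
  exact le_csSup hbdd ⟨a, hAB ha, b, hAB hb, rfl⟩

lemma orb_subset_of_mem {T : X → X} {x p : X} (hp : p ∈ orb T x) :
    orb T p ⊆ orb T x := by
  obtain ⟨m, rfl⟩ := hp
  rintro q ⟨a, rfl⟩
  exact ⟨a + m, (Function.iterate_add_apply T a m x).symm⟩

lemma memo2l {T : X → X} {x y a : X} (h : a ∈ orb T x) : a ∈ orb2 T x y :=
  Set.mem_union_left _ h

lemma memo2r {T : X → X} {x y a : X} (h : a ∈ orb T y) : a ∈ orb2 T x y :=
  Set.mem_union_right _ h

lemma iter_memo2l (T : X → X) (x y : X) (m : ℕ) : T^[m] x ∈ orb2 T x y :=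
  memo2l ⟨m, rfl⟩

lemma iter_memo2r (T : X → X) (x y : X) (m : ℕ) : T^[m] y ∈ orb2 T x y :=
  memo2r ⟨m, rfl⟩

lemma self_memo2l (T : X → X) (x y : X) : x ∈ orb2 T x y := memo2l ⟨0, rfl⟩

lemma self_memo2r (T : X → X) (x y : X) : y ∈ orb2 T x y := memo2r ⟨0, rfl⟩

lemma orb_subset_orb2 {T : X → X} {x y p : X} (hp : p ∈ orb2 T x y) :
    orb T p ⊆ orb2 T x y := by
  rcases hp with h | h
  · exact fun q hq => memo2l (orb_subset_of_mem h hq)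
  · exact fun q hq => memo2r (orb_subset_of_mem h hq)

lemma orb2_subset_orb2 {T : X → X} {x y p q : X}
    (hp : p ∈ orb2 T x y) (hq : q ∈ orb2 T x y) : orb2 T p q ⊆ orb2 T x y :=
  Set.union_subset (orb_subset_orb2 hp) (orb_subset_orb2 hq)

lemma diamd_orb2_triangle {d : X → X → ℝ} {s : ℝ} (hd : IsBMetric d s) (T : X → X)
    (x y z : X)
    (b1 : BddAbove (distSet d (orb2 T x y)))
    (b2 : BddAbove (distSet d (orb2 T y z))) :
    diamd d (orb2 T x z) ≤ s * (diamd d (orb2 T x y) + diamd d (orb2 T y z)) := by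
  obtain ⟨hs, h0, -, -, htri⟩ := hd
  have hD1 : 0 ≤ diamd d (orb2 T x y) := diamd_nonneg' d h0 _
  have hD2 : 0 ≤ diamd d (orb2 T y z) := diamd_nonneg' d h0 _
  apply diamd_le' d (by nlinarith)
  rintro a ha b hb
  rcases ha with ha | ha <;> rcases hb with hb | hb
  · have h1 := le_diamd' d (memo2l (y := y) ha) (memo2l (y := y) hb) b1
    nlinarith
  · have h1 := le_diamd' d (memo2l (y := y) ha) (self_memo2r T x y) b1
    have h2 := le_diamd' d (self_memo2l T y z) (memo2r (x := y) hb) b2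
    have h3 := htri a b y
    nlinarith
  · have h1 := le_diamd' d (memo2r (x := y) ha) (self_memo2l T y z) b2
    have h2 := le_diamd' d (self_memo2r T x y) (memo2l (y := y) hb) b1
    have h3 := htri a b y
    nlinarith
  · have h1 := le_diamd' d (memo2r (x := y) ha) (memo2r (x := y) hb) b2
    nlinarith

lemma diamd_orb2_contract {d : X → X → ℝ} {s : ℝ} (hd : IsBMetric d s) {T : X → X}
    {ψ : ℝ → ℝ} (hψ : IsComparison ψ)
    (hc : ∀ x y, d (T x) (T y) ≤ ψ (diamd d (orb2 T x y)))
    (hbdd : ∀ x y, BddAbove (distSet d (orb2 T x y)))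
    (a b : X) :
    diamd d (orb2 T (T a) (T b)) ≤ ψ (diamd d (orb2 T a b)) := by
  obtain ⟨-, h0, -, -, -⟩ := hd
  obtain ⟨hmono, -, hpos, -, -⟩ := hψ
  have hD0 : 0 ≤ diamd d (orb2 T a b) := diamd_nonneg' d h0 _
  apply diamd_le' d (hpos _ hD0)
  have key : ∀ w ∈ orb2 T (T a) (T b), ∃ w', w' ∈ orb2 T a b ∧ w = T w' := by
    rintro w (⟨c, rfl⟩ | ⟨c, rfl⟩)
    · exact ⟨T^[c] a, memo2l ⟨c, rfl⟩, by
        rw [← Function.iterate_succ_apply, Function.iterate_succ_apply']⟩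
    · exact ⟨T^[c] b, memo2r ⟨c, rfl⟩, by
        rw [← Function.iterate_succ_apply, Function.iterate_succ_apply']⟩
  rintro u hu v hv
  obtain ⟨u', hu', rfl⟩ := key u hu
  obtain ⟨v', hv', rfl⟩ := key v hv
  calc d (T u') (T v') ≤ ψ (diamd d (orb2 T u' v')) := hc u' v'
    _ ≤ ψ (diamd d (orb2 T a b)) :=
        hmono (Set.mem_Ici.mpr (diamd_nonneg' d h0 _)) (Set.mem_Ici.mpr hD0)
          (diamd_mono' d h0 (orb2_subset_orb2 hu' hv') (hbdd a b))

lemma comparison_nonneg_iter {ψ : ℝ → ℝ} (hψ : IsComparison ψ) {t : ℝ} (ht : 0 ≤ t) :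
    ∀ m, 0 ≤ ψ^[m] t := by
  intro m
  induction m with
  | zero => simpa using ht
  | succ k ih => rw [Function.iterate_succ_apply']; exact hψ.2.2.1 _ ih

lemma diamd_orb2_iterate {d : X → X → ℝ} {s : ℝ} (hd : IsBMetric d s) {T : X → X}
    {ψ : ℝ → ℝ} (hψ : IsComparison ψ)
    (hc : ∀ x y, d (T x) (T y) ≤ ψ (diamd d (orb2 T x y)))
    (hbdd : ∀ x y, BddAbove (distSet d (orb2 T x y)))
    (m : ℕ) (a b : X) :
    diamd d (orb2 T (T^[m] a) (T^[m] b)) ≤ ψ^[m] (diamd d (orb2 T a b)) := by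
  have h0 : ∀ x y, 0 ≤ d x y := hd.2.1
  induction m with
  | zero => simp
  | succ k ih =>
    rw [Function.iterate_succ_apply' T, Function.iterate_succ_apply' T,
      Function.iterate_succ_apply' ψ]
    calc diamd d (orb2 T (T (T^[k] a)) (T (T^[k] b)))
        ≤ ψ (diamd d (orb2 T (T^[k] a) (T^[k] b))) :=
          diamd_orb2_contract hd hψ hc hbdd _ _
      _ ≤ ψ (ψ^[k] (diamd d (orb2 T a b))) :=
          hψ.1 (Set.mem_Ici.mpr (diamd_nonneg' d h0 _))
            (Set.mem_Ici.mpr (comparison_nonneg_iter hψ (diamd_nonneg' d h0 _) k)) ih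

lemma comparison_iterate_lt {ψ : ℝ → ℝ} (hψ : IsComparison ψ) {D : ℝ} (hD : 0 ≤ D)
    {η : ℝ} (hη : 0 < η) : ∃ m, ψ^[m] D < η := by
  by_contra h
  push_neg at h
  set t : ℕ → ℝ := fun m => ψ^[m] D with ht
  have htnn : ∀ m, 0 ≤ t m := fun m => comparison_nonneg_iter hψ hD m
  have hanti : Antitone t := by
    apply antitone_nat_of_succ_le
    intro m
    have h0 := htnn m
    have hle : ψ (t m) ≤ t m := by
      rcases eq_or_lt_of_le h0 with he | hlt
      · rw [← he, hψ.2.2.2.1]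
      · exact (hψ.2.2.2.2 _ hlt).le
    simpa [ht, Function.iterate_succ_apply'] using hle
  have hbdd : BddBelow (Set.range t) := ⟨0, by rintro r ⟨m, rfl⟩; exact htnn m⟩
  set L := ⨅ m, t m with hL
  have hLt : Filter.Tendsto t Filter.atTop (nhds L) := tendsto_atTop_ciInf hanti hbdd
  have hηL : η ≤ L := le_ciInf fun m => h m
  have hL0 : 0 < L := lt_of_lt_of_le hη hηL
  have husc := hψ.2.1 L (Set.mem_Ici.mpr hL0.le)
  have hψL : ψ L < L := hψ.2.2.2.2 L hL0
  have hev := husc ((ψ L + L) / 2) (by linarith)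
  have htend : Filter.Tendsto t Filter.atTop (nhdsWithin L (Set.Ici 0)) :=
    tendsto_nhdsWithin_iff.mpr ⟨hLt, Filter.Eventually.of_forall htnn⟩
  obtain ⟨m, hm⟩ := (htend.eventually hev).exists
  have h1 : t (m + 1) < (ψ L + L) / 2 := by
    simpa [ht, Function.iterate_succ_apply'] using hm
  have h2 : L ≤ t (m + 1) := ciInf_le hbdd (m + 1)
  linarith

noncomputable def geomAux (s : ℝ) : ℕ → ℝ
  | 0 => 1
  | k + 1 => s * (1 + geomAux s k)

lemma geomAux_ge_one {s : ℝ} (hs : 1 ≤ s) : ∀ k, 1 ≤ geomAux s k := by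
  intro k
  induction k with
  | zero => simp [geomAux]
  | succ k ih => simp only [geomAux]; nlinarith

end AuxLemmas
set_option maxHeartbeats 2000000 in
theorem stmt8 {X : Type*} (d : X → X → ℝ) (s : ℝ)
    (hX : IsCompleteBMetric d s) (θ : X)
    (E : Set X) (hE : E.Nonempty) (hEbdd : BddAbove (distSet d E))
    (hEcl : IsClosedD d E)
    (T : ℕ → X → X) (hT : ∀ i : ℕ, IsWeakQuasiContraction d (T i))
    (hOb : ∀ i : ℕ, OBContinuous d (T i))
    (hmono : ∀ i j : ℕ, ∀ x y : X,
      diamd d (orb2 (T j) (T i x) (T i y)) ≤ diamd d (orb2 (T j) x y))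
    (𝓕 : Set (ℕ → ℕ)) (h𝓕 : 𝓕.Nonempty) (hF : PropF 𝓕)
    (hP3 : ∀ e ∈ E, ∀ i : ℕ, ∃ e' ∈ E, T i e' = e)
    (hP4 : ∀ ε > (0 : ℝ), ∀ K > (0 : ℝ), ∃ n : ℕ, ∀ f ∈ 𝓕, ∀ x : X,
      (∀ i : ℕ, diamd d (orb2 (T i) x θ) ≤ K / s) →
      distPtSet d (compSeq T f n x) E < ε) :
    ∀ ε > (0 : ℝ), ∀ K > (0 : ℝ), ∃ δ > (0 : ℝ), ∃ nhat : ℕ, ∀ f ∈ 𝓕, ∀ x : ℕ → X,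
      (∀ i : ℕ, diamd d (orb2 (T i) (x 0) θ) ≤ K / s) →
      (∀ i j : ℕ, diamd d (orb2 (T (f j)) (x (i + 1)) (T (f i) (x i))) ≤ δ) →
      ∀ i ≥ nhat, distPtSet d (x i) E < ε := by
  obtain ⟨hd, -⟩ := hX
  have hdc := hd
  obtain ⟨hs, h0, -, hsym, htri⟩ := hdc
  have hs0 : (0 : ℝ) < s := lt_of_lt_of_le one_pos hs
  intro ε hε K hK
  set ε2 := ε / (4 * s ^ 2) with hε2def
  have hε2pos : 0 < ε2 := div_pos hε (by nlinarith)
  obtain ⟨n, hn⟩ := hP4 ε2 hε2pos K hK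
  set u := geomAux s n with hu
  have hu1 : 1 ≤ u := geomAux_ge_one hs n
  set C := s ^ 2 + s ^ 3 + s ^ 2 * u + 1 with hC
  have hC0 : (0 : ℝ) < C := by nlinarith
  set δ := ε / (4 * C) with hδdef
  have hδ0 : 0 < δ := div_pos hε (by nlinarith)
  set η := ε / (4 * s ^ 3) with hηdef
  have hη0 : 0 < η := div_pos hε (by nlinarith)
  clear_value ε2 u C δ η
  refine ⟨δ, hδ0, n + 1, ?_⟩
  intro f hf x hx0 hx2 i hi
  have hb : ∀ j : ℕ, ∀ a b : X, BddAbove (distSet d (orb2 (T j) a b)) :=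
    fun j => (hT j).1
  set T0 := T (f 0) with hT0
  -- the genuine composition chain starting at x 0
  set w : ℕ → X := fun k => compSeq T f k (x 0) with hw
  have hwsucc : ∀ k, w (k + 1) = T (f (k + 1)) (w k) := fun k => rfl
  -- the accumulated error bound along the chain
  have hB : ∀ k, diamd d (orb2 T0 (x (k + 1)) (w k)) ≤ δ * geomAux s k := by
    intro k
    induction k with
    | zero => simpa [geomAux, show w 0 = T (f 0) (x 0) from rfl] using hx2 0 0
    | succ k ih =>
      have h1 : diamd d (orb2 T0 (x (k + 2)) (T (f (k + 1)) (x (k + 1)))) ≤ δ :=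
        hx2 (k + 1) 0
      have h2 : diamd d (orb2 T0 (T (f (k + 1)) (x (k + 1))) (T (f (k + 1)) (w k)))
          ≤ δ * geomAux s k :=
        le_trans (hmono (f (k + 1)) (f 0) (x (k + 1)) (w k)) ih
      have h3 := diamd_orb2_triangle hd T0 (x (k + 2)) (T (f (k + 1)) (x (k + 1)))
        (T (f (k + 1)) (w k)) (hb _ _ _) (hb _ _ _)
      rw [hwsucc k]
      have hgeom : geomAux s (k + 1) = s * (1 + geomAux s k) := rfl
      have hg1 : 1 ≤ geomAux s k := geomAux_ge_one hs k
      calc diamd d (orb2 T0 (x (k + 2)) (T (f (k + 1)) (w k)))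
          ≤ s * (δ + δ * geomAux s k) := by nlinarith
        _ = δ * geomAux s (k + 1) := by rw [hgeom]; ring
  -- x (n+1) is close to E
  have hP := hn f hf (x 0) hx0
  have hEne : {r | ∃ a ∈ E, r = d (w n) a}.Nonempty :=
    ⟨d (w n) hE.choose, hE.choose, hE.choose_spec, rfl⟩
  obtain ⟨r, hrmem, hre⟩ := exists_lt_of_csInf_lt hEne hP
  obtain ⟨e, he, rfl⟩ := hrmem
  have hwnx : d (x (n + 1)) (w n) ≤ δ * u := by
    rw [hu]
    refine le_trans (le_diamd' d (self_memo2l T0 _ _) (self_memo2r T0 _ _) (hb _ _ _))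
      (hB n)
  have hxn1e : d (x (n + 1)) e ≤ s * (δ * u + ε2) := by
    calc d (x (n + 1)) e ≤ s * (d (x (n + 1)) (w n) + d (w n) e) := htri _ _ _
      _ ≤ s * (δ * u + ε2) := by nlinarith
  -- every x (p+1) has a δ-small T0-orbit
  have hsmall : ∀ p m : ℕ, d (x (p + 1)) (T0^[m] (x (p + 1))) ≤ δ := by
    intro p m
    have h1 : x (p + 1) ∈ orb2 T0 (x (p + 1)) (T (f p) (x p)) := self_memo2l _ _ _
    have h2 : T0^[m] (x (p + 1)) ∈ orb2 T0 (x (p + 1)) (T (f p) (x p)) :=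
      iter_memo2l _ _ _ m
    exact le_trans (le_diamd' d h1 h2 (hb _ _ _)) (hx2 p 0)
  -- x i is close to x (n+1)
  obtain ⟨i', rfl⟩ : ∃ i', i = i' + 1 := ⟨i - 1, by omega⟩
  obtain ⟨hbT0, ψ, hψ, hcψ⟩ := hT (f 0)
  set D := diamd d (orb2 T0 (x (i' + 1)) (x (n + 1))) with hD
  have hD0 : 0 ≤ D := diamd_nonneg' d h0 _
  obtain ⟨m, hm⟩ := comparison_iterate_lt hψ hD0 hη0
  have hiter : diamd d (orb2 T0 (T0^[m] (x (i' + 1))) (T0^[m] (x (n + 1)))) ≤ ψ^[m] D :=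
    diamd_orb2_iterate hd hψ hcψ hbT0 m _ _
  have hmid : d (T0^[m] (x (i' + 1))) (T0^[m] (x (n + 1))) ≤ η := by
    refine le_trans (le_trans (le_diamd' d (self_memo2l T0 _ _) (self_memo2r T0 _ _)
      (hb _ _ _)) hiter) hm.le
  have hA : d (x (i' + 1)) (x (n + 1)) ≤ s * (δ + s * (η + δ)) := by
    have e1 := htri (x (i' + 1)) (x (n + 1)) (T0^[m] (x (i' + 1)))
    have e2 := htri (T0^[m] (x (i' + 1))) (x (n + 1)) (T0^[m] (x (n + 1)))
    have e3 : d (T0^[m] (x (n + 1))) (x (n + 1)) ≤ δ := by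
      rw [hsym]; exact hsmall n m
    have e4 := hsmall i' m
    nlinarith [hsmall i' m]
  -- conclude
  have hfin : d (x (i' + 1)) e ≤ s * (s * (δ + s * (η + δ)) + s * (δ * u + ε2)) := by
    have e5 := htri (x (i' + 1)) e (x (n + 1))
    nlinarith
  have hle : distPtSet d (x (i' + 1)) E ≤ d (x (i' + 1)) e := by
    apply csInf_le
    · exact ⟨0, by rintro r ⟨a, -, rfl⟩; exact h0 _ _⟩
    · exact ⟨e, he, rfl⟩
  have hδC : δ * (4 * C) = ε := by
    have h1 : (4 * C) ≠ 0 := ne_of_gt (by nlinarith)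
    rw [hδdef]; field_simp
  have hηs : η * (4 * s ^ 3) = ε := by
    have h1 : (4 * s ^ 3) ≠ 0 := ne_of_gt (by nlinarith)
    rw [hηdef]; field_simp
  have hε2s : ε2 * (4 * s ^ 2) = ε := by
    have h1 : (4 * s ^ 2) ≠ 0 := ne_of_gt (by nlinarith)
    rw [hε2def]; field_simp
  have hnum : s * (s * (δ + s * (η + δ)) + s * (δ * u + ε2)) < ε := by
    have hexp : s * (s * (δ + s * (η + δ)) + s * (δ * u + ε2))
        = s ^ 2 * δ + s ^ 3 * η + s ^ 3 * δ + s ^ 2 * (δ * u) + s ^ 2 * ε2 := by ring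
    have hCval : δ * C = ε / 4 := by linarith [hδC]
    have hCe : δ * (s ^ 2 + s ^ 3 + s ^ 2 * u + 1) = ε / 4 := by
      rw [← hC]; exact hCval
    nlinarith [hCe, hηs, hε2s, hδ0, hε]
  calc distPtSet d (x (i' + 1)) E ≤ d (x (i' + 1)) e := hle
    _ ≤ s * (s * (δ + s * (η + δ)) + s * (δ * u + ε2)) := hfin
    _ < ε := hnum
end
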